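/- Define ȷ : {(y,ỹ) ∈ ℝ^s × ℝ : |y|² + ỹ² ≤ 1, |ỹ| < ε} → 𝔹^s × (−ε,ε) by ȷ(y,ỹ) = (y/√(1−ỹ²), ỹ), for fixed ε ∈ (0,1). Then with ρ_Z = 1 − |y| on 𝔹^s and ρ = 1 − √(|y|²+ỹ²), one has ȷ*ρ_Z = ρ · h where h(y,ỹ) = (1/√(1−ỹ²)) · (√(1−ỹ²) − |y|)/(1 − √(ỹ²+|y|²)) is smooth and strictly positive on the domain (including the boundary |y|²+ỹ²=1). Hence ȷ is an sc-map. -/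

import Mathlib

/-- The map `ȷ(y,ỹ) = (y/√(1−ỹ²), ỹ)` on `𝔹^{s+1} ∩ {|ỹ| < ε}` is an sc-map into
`𝔹^s × (−ε,ε)`: with `ρ_Z = 1 − ‖y‖` and `ρ = 1 − √(‖y‖² + ỹ²)` one has
`ȷ*ρ_Z = ρ · h` where `h = (1/√(1−ỹ²)) · (√(1−ỹ²) − ‖y‖)/(1 − √(ỹ² + ‖y‖²))` is
positive in the interior, and `h` extends to a function `H` which is smooth (away from
the center `y = 0`) and strictly positive on the whole domain, including the boundary
`‖y‖² + ỹ² = 1`. -/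
theorem fiber_ball_embedding_sc_map {s : ℕ} (ε : ℝ) (hε : 0 < ε) (hε1 : ε < 1) :
    (∀ q : EuclideanSpace ℝ (Fin s) × ℝ,
        ‖q.1‖ ^ 2 + q.2 ^ 2 ≤ 1 → |q.2| < ε → ‖q.1‖ ^ 2 + q.2 ^ 2 < 1 →
        (1 - ‖(Real.sqrt (1 - q.2 ^ 2))⁻¹ • q.1‖
          = (1 - Real.sqrt (q.2 ^ 2 + ‖q.1‖ ^ 2)) *
            ((Real.sqrt (1 - q.2 ^ 2))⁻¹ *
              ((Real.sqrt (1 - q.2 ^ 2) - ‖q.1‖) /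
                (1 - Real.sqrt (q.2 ^ 2 + ‖q.1‖ ^ 2)))) ∧
        0 < (Real.sqrt (1 - q.2 ^ 2))⁻¹ *
              ((Real.sqrt (1 - q.2 ^ 2) - ‖q.1‖) /
                (1 - Real.sqrt (q.2 ^ 2 + ‖q.1‖ ^ 2))))) ∧
    ∃ H : EuclideanSpace ℝ (Fin s) × ℝ → ℝ,
      ContDiffOn ℝ (⊤ : ℕ∞) H
        {q : EuclideanSpace ℝ (Fin s) × ℝ |
          ‖q.1‖ ^ 2 + q.2 ^ 2 ≤ 1 ∧ |q.2| < ε ∧ q.1 ≠ 0} ∧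
      (∀ q : EuclideanSpace ℝ (Fin s) × ℝ,
        ‖q.1‖ ^ 2 + q.2 ^ 2 ≤ 1 → |q.2| < ε → 0 < H q) ∧
      (∀ q : EuclideanSpace ℝ (Fin s) × ℝ,
        ‖q.1‖ ^ 2 + q.2 ^ 2 < 1 → |q.2| < ε →
        H q = (Real.sqrt (1 - q.2 ^ 2))⁻¹ *
              ((Real.sqrt (1 - q.2 ^ 2) - ‖q.1‖) /
                (1 - Real.sqrt (q.2 ^ 2 + ‖q.1‖ ^ 2)))) ∧
      (∀ q : EuclideanSpace ℝ (Fin s) × ℝ,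
        ‖q.1‖ ^ 2 + q.2 ^ 2 ≤ 1 → |q.2| < ε →
        1 - ‖(Real.sqrt (1 - q.2 ^ 2))⁻¹ • q.1‖
          = (1 - Real.sqrt (q.2 ^ 2 + ‖q.1‖ ^ 2)) * H q) := by
  -- basic facts for a point with |q.2| < ε
  have key : ∀ q : EuclideanSpace ℝ (Fin s) × ℝ, |q.2| < ε →
      0 < Real.sqrt (1 - q.2 ^ 2) ∧ Real.sqrt (1 - q.2 ^ 2) ^ 2 = 1 - q.2 ^ 2 ∧
      Real.sqrt (q.2 ^ 2 + ‖q.1‖ ^ 2) ^ 2 = q.2 ^ 2 + ‖q.1‖ ^ 2 := by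
    intro q hy
    have h2 : q.2 ^ 2 < 1 := by
      have := abs_nonneg q.2
      nlinarith [sq_abs q.2]
    refine ⟨Real.sqrt_pos.2 (by linarith), Real.sq_sqrt (by linarith), Real.sq_sqrt (by positivity)⟩
  refine ⟨?_, ?_⟩
  · intro q hle hy hlt
    obtain ⟨ha, ha2, hc2⟩ := key q hy
    have hb : (0:ℝ) ≤ ‖q.1‖ := norm_nonneg _
    have hc : (0:ℝ) ≤ Real.sqrt (q.2 ^ 2 + ‖q.1‖ ^ 2) := Real.sqrt_nonneg _
    have hc1 : Real.sqrt (q.2 ^ 2 + ‖q.1‖ ^ 2) < 1 := by nlinarith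
    have hnorm : ‖(Real.sqrt (1 - q.2 ^ 2))⁻¹ • q.1‖ = (Real.sqrt (1 - q.2 ^ 2))⁻¹ * ‖q.1‖ := by
      rw [norm_smul, Real.norm_eq_abs, abs_of_pos (by positivity)]
    have hab : ‖q.1‖ < Real.sqrt (1 - q.2 ^ 2) := by nlinarith
    have h2 : (0:ℝ) < 1 - Real.sqrt (q.2 ^ 2 + ‖q.1‖ ^ 2) := by linarith
    constructor
    · rw [hnorm]
      field_simp [ha.ne', h2.ne']
    · have h1 : (0:ℝ) < Real.sqrt (1 - q.2 ^ 2) - ‖q.1‖ := by linarith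
      have h2 : (0:ℝ) < 1 - Real.sqrt (q.2 ^ 2 + ‖q.1‖ ^ 2) := by linarith
      positivity
  · refine ⟨fun q => (Real.sqrt (1 - q.2 ^ 2))⁻¹ *
      ((1 + Real.sqrt (q.2 ^ 2 + ‖q.1‖ ^ 2)) / (Real.sqrt (1 - q.2 ^ 2) + ‖q.1‖)), ?_, ?_, ?_, ?_⟩
    · intro q hq
      obtain ⟨hle, hy, hne⟩ := hq
      obtain ⟨ha, ha2, hc2⟩ := key q hy
      have hb : (0:ℝ) < ‖q.1‖ := norm_pos_iff.2 hne
      apply ContDiffAt.contDiffWithinAt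
      have hnorm : ContDiffAt ℝ (⊤ : ℕ∞) (fun p : EuclideanSpace ℝ (Fin s) × ℝ => ‖p.1‖) q :=
        (contDiffAt_norm ℝ hne).comp q contDiffAt_fst
      have hsnd : ContDiffAt ℝ (⊤ : ℕ∞) (fun p : EuclideanSpace ℝ (Fin s) × ℝ => p.2) q :=
        contDiffAt_snd
      have h1 : ContDiffAt ℝ (⊤ : ℕ∞) (fun p : EuclideanSpace ℝ (Fin s) × ℝ =>
          Real.sqrt (1 - p.2 ^ 2)) q :=
        (Real.contDiffAt_sqrt (by nlinarith : (1 : ℝ) - q.2 ^ 2 ≠ 0)).comp q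
          (contDiffAt_const.sub (hsnd.pow 2))
      have h2 : ContDiffAt ℝ (⊤ : ℕ∞) (fun p : EuclideanSpace ℝ (Fin s) × ℝ =>
          Real.sqrt (p.2 ^ 2 + ‖p.1‖ ^ 2)) q :=
        (Real.contDiffAt_sqrt (by positivity : q.2 ^ 2 + ‖q.1‖ ^ 2 ≠ 0)).comp q
          ((hsnd.pow 2).add (hnorm.pow 2))
      exact (h1.inv ha.ne').mul
        ((contDiffAt_const.add h2).div (h1.add hnorm) (by positivity))
    · intro q hle hy
      obtain ⟨ha, ha2, hc2⟩ := key q hy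
      have hb : (0:ℝ) ≤ ‖q.1‖ := norm_nonneg _
      have hc : (0:ℝ) ≤ Real.sqrt (q.2 ^ 2 + ‖q.1‖ ^ 2) := Real.sqrt_nonneg _
      positivity
    · intro q hlt hy
      obtain ⟨ha, ha2, hc2⟩ := key q hy
      have hb : (0:ℝ) ≤ ‖q.1‖ := norm_nonneg _
      have hc : (0:ℝ) ≤ Real.sqrt (q.2 ^ 2 + ‖q.1‖ ^ 2) := Real.sqrt_nonneg _
      have hc1 : Real.sqrt (q.2 ^ 2 + ‖q.1‖ ^ 2) < 1 := by nlinarith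
      have hab : (0:ℝ) < Real.sqrt (1 - q.2 ^ 2) + ‖q.1‖ := by linarith
      have h2 : (0:ℝ) < 1 - Real.sqrt (q.2 ^ 2 + ‖q.1‖ ^ 2) := by linarith
      field_simp
      nlinarith
    · intro q hle hy
      obtain ⟨ha, ha2, hc2⟩ := key q hy
      have hb : (0:ℝ) ≤ ‖q.1‖ := norm_nonneg _
      have hc : (0:ℝ) ≤ Real.sqrt (q.2 ^ 2 + ‖q.1‖ ^ 2) := Real.sqrt_nonneg _
      have hab : (0:ℝ) < Real.sqrt (1 - q.2 ^ 2) + ‖q.1‖ := by linarith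
      have hnorm : ‖(Real.sqrt (1 - q.2 ^ 2))⁻¹ • q.1‖ = (Real.sqrt (1 - q.2 ^ 2))⁻¹ * ‖q.1‖ := by
        rw [norm_smul, Real.norm_eq_abs, abs_of_pos (by positivity)]
      rw [hnorm]
      field_simp
      nlinarith
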